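/- Characterization of Klee sets: the following are equivalent: (i) every y ∈ U has a unique farthest point in C w.r.t. D_f; (ii) the farthest-point map is single-valued and continuous on U; (iii) y* ↦ sup_{c∈C} D_f(c, ∇f*(y*)) is continuously differentiable on ℝ^J; (iv) −f∨ + ι_{−C} is convex; (v) C is a singleton. -/

import Mathlib

/-!
Write `φ s = sup_{c ∈ C} D_f(c, g s)` with `g = ∇f*`. Since
`D_f(c, g s) = ⟪s, g s - c⟫ - (f (g s) - f c)` and `g s` maximizes `z ↦ ⟪s, z⟫ - f z`
(Fenchel–Young), `φ` is an upper envelope of functions of the form `⟪s, β⟫ - α`. Where the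
farthest point `P s` is unique it depends continuously on `s` (compactness of `C`), and the
envelope has gradient `g s - P s` there.

Conversely, if `φ` is differentiable everywhere, it is continuous and coercive (it dominates
`D_f(c₁, g ·)` for a point `c₁ ∈ C`, which grows linearly because `c₁` is interior to `dom f`),
so it attains its minimum at some `s₀`. Touching `φ` from below at `s₀` by `D_f(x, g ·)` for a
farthest point `x` gives `0 = ∇φ s₀ = g s₀ - x`, so every `c ∈ C` has
`D_f(c, x) ≤ D_f(x, x) = 0`, i.e. `C = {x}`.

Convexity of `-f∨` on `-C` says that `f` is concave on `C`; together with strict convexity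
this forces `C` to be a singleton.
-/

open scoped RealInnerProductSpace

/-- Bregman distance for real-valued `f` with gradient `f'`. -/
noncomputable abbrev bregman {J : ℕ}
    (f : EuclideanSpace ℝ (Fin J) → ℝ) (f' : EuclideanSpace ℝ (Fin J) → EuclideanSpace ℝ (Fin J))
    (x y : EuclideanSpace ℝ (Fin J)) : ℝ :=
  f x - f y - ⟪f' y, x - y⟫

open Filter Topology Set

theorem IsMaxOn.csSup_image_eq {α β : Type*} [ConditionallyCompleteLattice β] {f : α → β}
    {s : Set α} {a : α} (h : IsMaxOn f s a) (ha : a ∈ s) : sSup (f '' s) = f a :=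
  (h.isLUB ha).csSup_eq ⟨f a, a, ha, rfl⟩

theorem continuous_of_isMaxOn_unique {X Y : Type*} [TopologicalSpace X] [TopologicalSpace Y]
    {K : Set Y} (hK : IsCompact K) {F : X → Y → ℝ}
    (hF : ContinuousOn (Function.uncurry F) (univ ×ˢ K))
    {P : X → Y} (hPK : ∀ s, P s ∈ K) (hP : ∀ s, IsMaxOn (F s) K (P s))
    (huniq : ∀ s, ∀ y ∈ K, IsMaxOn (F s) K y → y = P s) : Continuous P := by
  -- every cluster point of `P` at `t` maximizes `F t` on `K`, hence is `P t`
  refine continuous_iff_continuousAt.2 fun t =>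
    hK.tendsto_nhds_of_unique_mapClusterPt (.of_forall hPK) fun y hy hclus => huniq t y hy ?_
  obtain ⟨𝒰, h𝒰, hP𝒰⟩ := mapClusterPt_iff_ultrafilter.1 hclus
  have hpair {Q : X → Y} {z : Y} (hQ : ∀ s, Q s ∈ K) (hz : z ∈ K) (hQz : Tendsto Q 𝒰 (𝓝 z)) :
      Tendsto (fun s => F s (Q s)) 𝒰 (𝓝 (F t z)) :=
    (hF (t, z) ⟨trivial, hz⟩).tendsto.comp <| tendsto_nhdsWithin_iff.2
      ⟨(tendsto_id'.2 h𝒰).prodMk_nhds hQz, .of_forall fun s => ⟨trivial, hQ s⟩⟩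
  intro c hc
  exact le_of_tendsto_of_tendsto' (hpair (fun _ => hc) hc tendsto_const_nhds)
    (hpair hPK hy hP𝒰) fun s => hP s hc

section Gradient

variable {E : Type*} [NormedAddCommGroup E] [InnerProductSpace ℝ E] [CompleteSpace E]

theorem ConvexOn.inner_le_sub_of_hasGradientAt {f : E → ℝ} {U : Set E} {x y G : E}
    (hf : ConvexOn ℝ U f) (hx : x ∈ U) (hy : y ∈ U) (hG : HasGradientAt f G x) :
    ⟪G, y - x⟫ ≤ f y - f x := by
  let ℓ : ℝ →ᵃ[ℝ] E := AffineMap.lineMap x y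
  have hline : HasDerivAt (f ∘ ℓ) ⟪G, y - x⟫ 0 := by
    simpa using hG.hasFDerivAt.comp_hasDerivAt_of_eq 0 AffineMap.hasDerivAt_lineMap (by simp)
  simpa [slope, ℓ] using (hf.comp_affineMap ℓ).le_slope_of_hasDerivAt
    (by simpa [ℓ] using hx) (by simpa [ℓ] using hy) one_pos hline

theorem StrictConvexOn.inner_lt_sub_of_hasGradientAt {f : E → ℝ} {U : Set E} {x y G : E}
    (hf : StrictConvexOn ℝ U f) (hx : x ∈ U) (hy : y ∈ U) (hxy : x ≠ y)
    (hG : HasGradientAt f G x) : ⟪G, y - x⟫ < f y - f x := by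
  have hmid := hf.2 hx hy hxy one_half_pos one_half_pos (add_halves 1)
  have hle := hf.convexOn.inner_le_sub_of_hasGradientAt hx
    (hf.1 hx hy one_half_pos.le one_half_pos.le (add_halves 1)) hG
  rw [show (1 / 2 : ℝ) • x + (1 / 2 : ℝ) • y - x = (1 / 2 : ℝ) • (y - x) by module,
    real_inner_smul_right] at hle
  simp only [smul_eq_mul] at hmid
  linarith

theorem hasGradientAt_of_forall_inner_sub_le {α : E → ℝ} {β : E → E} {t : E}
    (hmax : ∀ s s', ⟪s, β s'⟫ - α s' ≤ ⟪s, β s⟫ - α s) (hβ : ContinuousAt β t) :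
    HasGradientAt (fun s => ⟪s, β s⟫ - α s) (β t) t := by
  rw [hasGradientAt_iff_isLittleO, Asymptotics.isLittleO_iff]
  intro ε hε
  filter_upwards [hβ.eventually (Metric.closedBall_mem_nhds (β t) hε)] with s hs
  rw [dist_eq_norm] at hs
  have hlow := hmax s t
  have hupp := hmax t s
  have hcs : ⟪β s - β t, s - t⟫ ≤ ε * ‖s - t‖ :=
    (real_inner_le_norm _ _).trans (mul_le_mul_of_nonneg_right hs (norm_nonneg _))
  have hεs : 0 ≤ ε * ‖s - t‖ := mul_nonneg hε.le (norm_nonneg _)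
  rw [Real.norm_eq_abs, abs_le]
  simp only [inner_sub_right, real_inner_comm s, real_inner_comm t] at hlow hupp hcs ⊢
  constructor <;> linarith

theorem HasGradientAt.eq_of_le_of_eq {h₁ h₂ : E → ℝ} {G₁ G₂ t : E}
    (hG₁ : HasGradientAt h₁ G₁ t) (hG₂ : HasGradientAt h₂ G₂ t) (hle : ∀ s, h₁ s ≤ h₂ s)
    (heq : h₁ t = h₂ t) : G₁ = G₂ := by
  have hmin : IsLocalMin (fun s => h₂ s - h₁ s) t :=
    .of_forall fun s => by simp only [heq, sub_self, sub_nonneg, hle s]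
  have := hmin.hasFDerivAt_eq_zero (hG₂.hasFDerivAt.sub hG₁.hasFDerivAt)
  rw [← map_sub, LinearIsometryEquiv.map_eq_zero_iff, sub_eq_zero] at this
  exact this.symm

end Gradient

theorem concaveOn_of_convexOn_neg_comp_neg {E : Type*} [AddCommGroup E] [Module ℝ E]
    {f : E → ℝ} {C : Set E} (h : ConvexOn ℝ (-C) (fun x => -f (-x))) : ConcaveOn ℝ C f := by
  have := h.comp_linearMap (-LinearMap.id)
  rw [← neg_convexOn_iff]
  convert this using 1 <;> ext x <;> simp

theorem StrictConvexOn.subsingleton_of_concaveOn {E : Type*} [AddCommGroup E] [Module ℝ E]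
    {f : E → ℝ} {U C : Set E} (hf : StrictConvexOn ℝ U f) (hC : ConcaveOn ℝ C f) (hCU : C ⊆ U) :
    C.Subsingleton := by
  intro x hx y hy
  by_contra hxy
  have := hf.2 (hCU hx) (hCU hy) hxy one_half_pos one_half_pos (add_halves 1)
  have := hC.2 hx hy one_half_pos.le one_half_pos.le (add_halves 1)
  linarith

section Bregman

variable {J : ℕ} {f : EuclideanSpace ℝ (Fin J) → ℝ} {U : Set (EuclideanSpace ℝ (Fin J))}
  {f' g : EuclideanSpace ℝ (Fin J) → EuclideanSpace ℝ (Fin J)} {C : Set (EuclideanSpace ℝ (Fin J))}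

local notation "𝔼" => EuclideanSpace ℝ (Fin J)

theorem bregman_pos (hf : StrictConvexOn ℝ U f) (hf' : ∀ y ∈ U, HasGradientAt f (f' y) y)
    {x y : 𝔼} (hx : x ∈ U) (hy : y ∈ U) (hxy : x ≠ y) : 0 < bregman f f' x y := by
  have := hf.inner_lt_sub_of_hasGradientAt hy hx hxy.symm (hf' y hy)
  linarith

theorem bregman_comp_eq (hgr : ∀ s, f' (g s) = s) (c s : 𝔼) :
    bregman f f' c (g s) = ⟪s, g s - c⟫ - (f (g s) - f c) := by
  rw [bregman, hgr, inner_sub_right, inner_sub_right]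
  ring

theorem ConvexOn.inner_sub_le_inner_sub_comp (hf : ConvexOn ℝ U f)
    (hf' : ∀ y ∈ U, HasGradientAt f (f' y) y) (hgU : ∀ s, g s ∈ U) (hgr : ∀ s, f' (g s) = s)
    (s : 𝔼) {z : 𝔼} (hz : z ∈ U) : ⟪s, z⟫ - f z ≤ ⟪s, g s⟫ - f (g s) := by
  have := hf.inner_le_sub_of_hasGradientAt (hgU s) hz (hgr s ▸ hf' _ (hgU s))
  rw [inner_sub_right] at this
  linarith

theorem continuousOn_bregman_comp (hf' : ∀ y ∈ U, HasGradientAt f (f' y) y)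
    (hgU : ∀ s, g s ∈ U) (hgr : ∀ s, f' (g s) = s) (hg : Continuous g) :
    ContinuousOn (fun p : 𝔼 × 𝔼 => bregman f f' p.2 (g p.1)) (univ ×ˢ U) := by
  have hfU : ContinuousOn f U := HasGradientAt.continuousOn hf'
  have hfg : Continuous (f ∘ g) := hfU.comp_continuous hg hgU
  simp only [bregman_comp_eq hgr]
  exact (continuous_fst.inner ((hg.comp continuous_fst).sub continuous_snd)).continuousOn.sub
    ((hfg.comp continuous_fst).continuousOn.sub
      (hfU.comp continuousOn_snd fun p hp => hp.2))

theorem hasGradientAt_bregman_comp (hf : ConvexOn ℝ U f)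
    (hf' : ∀ y ∈ U, HasGradientAt f (f' y) y) (hgU : ∀ s, g s ∈ U) (hgr : ∀ s, f' (g s) = s)
    {P : 𝔼 → 𝔼} (hP : ∀ s s', bregman f f' (P s') (g s) ≤ bregman f f' (P s) (g s))
    {t : 𝔼} (hg : ContinuousAt g t) (hPt : ContinuousAt P t) :
    HasGradientAt (fun s => bregman f f' (P s) (g s)) (g t - P t) t := by
  simp only [bregman_comp_eq hgr]
  refine hasGradientAt_of_forall_inner_sub_le (fun s s' => ?_) (hg.sub hPt)
  have hfy := hf.inner_sub_le_inner_sub_comp hf' hgU hgr s (hgU s')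
  have hmax := hP s s'
  rw [bregman_comp_eq hgr, bregman_comp_eq hgr] at hmax
  simp only [inner_sub_right] at hmax ⊢
  linarith

theorem tendsto_bregman_comp_cocompact (hU : IsOpen U) (hf : ConvexOn ℝ U f)
    (hf' : ∀ y ∈ U, HasGradientAt f (f' y) y) (hgU : ∀ s, g s ∈ U) (hgr : ∀ s, f' (g s) = s)
    {c : 𝔼} (hc : c ∈ U) :
    Tendsto (fun s => bregman f f' c (g s)) (cocompact 𝔼) atTop := by
  obtain ⟨ε, hε, hball⟩ := Metric.isOpen_iff.1 hU c hc
  have hδ : 0 < ε / 2 := half_pos hε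
  have hK : Metric.closedBall c (ε / 2) ⊆ U :=
    (Metric.closedBall_subset_ball (half_lt_self hε)).trans hball
  obtain ⟨M, hM⟩ := (isCompact_closedBall c (ε / 2)).bddAbove_image
    ((HasGradientAt.continuousOn hf').mono hK)
  have hbound : ∀ s ≠ 0, ε / 2 * ‖s‖ + (f c - M) ≤ bregman f f' c (g s) := by
    intro s hs
    set z := c + (ε / 2 / ‖s‖) • s
    have hzs : ⟪s, z - c⟫ = ε / 2 * ‖s‖ := by
      rw [add_sub_cancel_left, real_inner_smul_right, real_inner_self_eq_norm_sq]
      field_simp [norm_ne_zero_iff.2 hs]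
    have hz : z ∈ Metric.closedBall c (ε / 2) := by
      rw [Metric.mem_closedBall, dist_eq_norm, add_sub_cancel_left, norm_smul, Real.norm_eq_abs,
        abs_of_nonneg (by positivity), div_mul_cancel₀ _ (norm_ne_zero_iff.2 hs)]
    have hfy := hf.inner_sub_le_inner_sub_comp hf' hgU hgr s (hK hz)
    have hfz := hM (mem_image_of_mem f hz)
    rw [bregman_comp_eq hgr, inner_sub_right]
    rw [inner_sub_right] at hzs
    linarith
  refine tendsto_atTop_mono' _ ?_ ((tendsto_norm_cocompact_atTop.const_mul_atTop hδ).atTop_add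
    (tendsto_const_nhds (x := f c - M)))
  filter_upwards [(isCompact_singleton (x := (0 : 𝔼))).compl_mem_cocompact] with s hs
  exact hbound s hs

theorem exists_hasGradientAt_sSup_bregman_of_existsUnique (hf : ConvexOn ℝ U f)
    (hf' : ∀ y ∈ U, HasGradientAt f (f' y) y) (hgU : ∀ s, g s ∈ U) (hgr : ∀ s, f' (g s) = s)
    (hg : Continuous g) (hCcp : IsCompact C) (hCU : C ⊆ U)
    (h : ∀ y ∈ U, ∃! x, x ∈ C ∧ ∀ c ∈ C, bregman f f' c y ≤ bregman f f' x y) :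
    ∃ G : 𝔼 → 𝔼, Continuous G ∧
      ∀ s, HasGradientAt (fun t => sSup ((fun c => bregman f f' c (g t)) '' C)) (G s) s := by
  choose P hP huniq using fun s => h (g s) (hgU s)
  have hPc : Continuous P :=
    continuous_of_isMaxOn_unique hCcp (F := fun s c => bregman f f' c (g s))
      ((continuousOn_bregman_comp hf' hgU hgr hg).mono (prod_mono subset_rfl hCU))
      (fun s => (hP s).1) (fun s => (hP s).2) fun s y hy hmax => huniq s y ⟨hy, hmax⟩
  have hsup : (fun t => sSup ((fun c => bregman f f' c (g t)) '' C)) =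
      fun t => bregman f f' (P t) (g t) :=
    funext fun t => IsMaxOn.csSup_image_eq (hP t).2 (hP t).1
  refine ⟨g - P, hg.sub hPc, fun s => ?_⟩
  rw [hsup]
  exact hasGradientAt_bregman_comp hf hf' hgU hgr (fun s s' => (hP s).2 _ (hP s').1)
    hg.continuousAt hPc.continuousAt

theorem exists_eq_singleton_of_hasGradientAt_sSup_bregman (hU : IsOpen U)
    (hf : StrictConvexOn ℝ U f) (hf' : ∀ y ∈ U, HasGradientAt f (f' y) y)
    (hgU : ∀ s, g s ∈ U) (hgr : ∀ s, f' (g s) = s) (hg : Continuous g) (hCne : C.Nonempty)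
    (hCcp : IsCompact C) (hCU : C ⊆ U) {G : 𝔼 → 𝔼}
    (hG : ∀ s, HasGradientAt (fun t => sSup ((fun c => bregman f f' c (g t)) '' C)) (G s) s) :
    ∃ c, C = {c} := by
  set φ := fun t => sSup ((fun c => bregman f f' c (g t)) '' C)
  obtain ⟨c₁, hc₁⟩ := hCne
  have hcont (s) : ContinuousOn (fun c => bregman f f' c (g s)) C :=
    (continuousOn_bregman_comp hf' hgU hgr hg).comp
      (continuous_const.prodMk continuous_id).continuousOn fun c hc => ⟨trivial, hCU hc⟩
  have hle (s) {c} (hc : c ∈ C) : bregman f f' c (g s) ≤ φ s :=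
    le_csSup (hCcp.image_of_continuousOn (hcont s)).bddAbove (mem_image_of_mem _ hc)
  obtain ⟨tb, htb⟩ := Continuous.exists_forall_le
    (continuous_iff_continuousAt.2 fun s => (hG s).continuousAt)
    (tendsto_atTop_mono (fun s => hle s hc₁)
      (tendsto_bregman_comp_cocompact hU hf.convexOn hf' hgU hgr (hCU hc₁)))
  obtain ⟨x, hxC, hx⟩ := hCcp.exists_isMaxOn ⟨c₁, hc₁⟩ (hcont tb)
  have hG0 : 0 = G tb := (hasGradientAt_const _ _).eq_of_le_of_eq (hG tb) htb rfl
  have hGx : g tb - x = G tb :=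
    (hasGradientAt_bregman_comp hf.convexOn hf' hgU hgr (P := fun _ => x) (fun _ _ => le_rfl)
      hg.continuousAt continuousAt_const).eq_of_le_of_eq (hG tb) (fun s => hle s hxC)
      (hx.csSup_image_eq hxC).symm
  rw [← hG0, sub_eq_zero] at hGx
  refine ⟨x, eq_singleton_iff_unique_mem.2 ⟨hxC, fun c hc => ?_⟩⟩
  by_contra hcx
  have hpos := bregman_pos hf hf' (hCU hc) (hgU tb) (hGx ▸ hcx)
  have hmax : bregman f f' c (g tb) ≤ 0 := by simpa [← hGx, bregman] using hx hc
  linarith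

end Bregman

theorem klee_set_characterizations_general {J : ℕ}
    (f : EuclideanSpace ℝ (Fin J) → ℝ) (U : Set (EuclideanSpace ℝ (Fin J)))
    (hU : IsOpen U)
    (hconv : StrictConvexOn ℝ U f)
    (f' : EuclideanSpace ℝ (Fin J) → EuclideanSpace ℝ (Fin J))
    (hf' : ∀ y ∈ U, HasGradientAt f (f' y) y)
    (g : EuclideanSpace ℝ (Fin J) → EuclideanSpace ℝ (Fin J))
    (hgU : ∀ s, g s ∈ U) (hgr : ∀ s, f' (g s) = s)
    (hgcont : Continuous g)
    (C : Set (EuclideanSpace ℝ (Fin J))) (hCne : C.Nonempty)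
    (hCcp : IsCompact C) (hCU : C ⊆ U) :
    List.TFAE
      [∀ y ∈ U, ∃! x, x ∈ C ∧ ∀ c ∈ C, bregman f f' c y ≤ bregman f f' x y,
       ∃ Q : EuclideanSpace ℝ (Fin J) → EuclideanSpace ℝ (Fin J), ContinuousOn Q U ∧
         ∀ y ∈ U, Q y ∈ C ∧ (∀ c ∈ C, bregman f f' c y ≤ bregman f f' (Q y) y) ∧
           ∀ x ∈ C, (∀ c ∈ C, bregman f f' c y ≤ bregman f f' x y) → x = Q y,
       ∃ G : EuclideanSpace ℝ (Fin J) → EuclideanSpace ℝ (Fin J), Continuous G ∧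
         ∀ s, HasGradientAt (fun t => sSup ((fun c => bregman f f' c (g t)) '' C)) (G s) s,
       ConvexOn ℝ (-C) (fun x => -f (-x)),
       ∃ c, C = {c}] := by
  tfae_have 1 → 3 :=
    exists_hasGradientAt_sSup_bregman_of_existsUnique hconv.convexOn hf' hgU hgr hgcont hCcp hCU
  tfae_have 3 → 5 := fun ⟨_, _, hG⟩ =>
    exists_eq_singleton_of_hasGradientAt_sSup_bregman hU hconv hf' hgU hgr hgcont hCne hCcp hCU hG
  tfae_have 5 → 2 := by
    rintro ⟨c, rfl⟩
    exact ⟨fun _ => c, continuousOn_const, fun _ _ => ⟨rfl, by simp, by simp⟩⟩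
  tfae_have 2 → 1 := fun ⟨Q, _, hQ⟩ y hy =>
    ⟨Q y, ⟨(hQ y hy).1, (hQ y hy).2.1⟩, fun x hx => (hQ y hy).2.2 x hx.1 hx.2⟩
  tfae_have 4 → 5 := fun h => exists_eq_singleton_iff_nonempty_subsingleton.2
    ⟨hCne, hconv.subsingleton_of_concaveOn (concaveOn_of_convexOn_neg_comp_neg h) hCU⟩
  tfae_have 5 → 4 := by
    rintro ⟨c, rfl⟩
    rw [neg_singleton]
    exact (convexOn_const (-f c) (convex_singleton _)).congr fun x hx => by
      rw [mem_singleton_iff.1 hx, neg_neg]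
  tfae_finish

/-- Characterization of `D_f`-Klee sets: uniqueness of farthest points, single-valuedness
and continuity of the farthest-point map, continuous differentiability of
`y* ↦ sup_{c∈C} D_f(c, ∇f*(y*))`, convexity of `−f∨ + ι_{−C}`, and `C` being a
singleton are all equivalent. -/
theorem klee_set_characterizations {J : ℕ}
    (f : EuclideanSpace ℝ (Fin J) → ℝ) (U : Set (EuclideanSpace ℝ (Fin J)))
    (hU : IsOpen U) (hUne : U.Nonempty)
    (hconv : StrictConvexOn ℝ U f)
    (f' : EuclideanSpace ℝ (Fin J) → EuclideanSpace ℝ (Fin J))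
    (hf' : ∀ y ∈ U, HasGradientAt f (f' y) y)
    (hcoer : Filter.Tendsto (fun x : EuclideanSpace ℝ (Fin J) => f x / ‖x‖)
      (Filter.comap norm Filter.atTop) Filter.atTop)
    (g : EuclideanSpace ℝ (Fin J) → EuclideanSpace ℝ (Fin J))
    (hgU : ∀ s, g s ∈ U) (hgr : ∀ s, f' (g s) = s) (hgl : ∀ y ∈ U, g (f' y) = y)
    (hgcont : Continuous g)
    (C : Set (EuclideanSpace ℝ (Fin J))) (hCne : C.Nonempty)
    (hCcp : IsCompact C) (hCU : C ⊆ U) :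
    List.TFAE
      [∀ y ∈ U, ∃! x, x ∈ C ∧ ∀ c ∈ C, bregman f f' c y ≤ bregman f f' x y,
       ∃ Q : EuclideanSpace ℝ (Fin J) → EuclideanSpace ℝ (Fin J), ContinuousOn Q U ∧
         ∀ y ∈ U, Q y ∈ C ∧ (∀ c ∈ C, bregman f f' c y ≤ bregman f f' (Q y) y) ∧
           ∀ x ∈ C, (∀ c ∈ C, bregman f f' c y ≤ bregman f f' x y) → x = Q y,
       ∃ G : EuclideanSpace ℝ (Fin J) → EuclideanSpace ℝ (Fin J), Continuous G ∧
         ∀ s, HasGradientAt (fun t => sSup ((fun c => bregman f f' c (g t)) '' C)) (G s) s,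
       ConvexOn ℝ (-C) (fun x => -f (-x)),
       ∃ c, C = {c}] :=
  klee_set_characterizations_general f U hU hconv f' hf' g hgU hgr hgcont C hCne hCcp hCU
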